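/- If F is a forest and m is the maximal cardinality of an independent set of vertices in F, then Hom(F̄, K_n) is homotopy equivalent to Hom(K_m, K_n), where F̄ is the unlooped complement of F. -/

import Mathlib

open scoped Topology

/-- A cell of the Lovász `Hom` complex of multihomomorphisms between two graphs,
given by adjacency relations `A` and `B`: a function assigning to each vertex a
nonempty set of vertices such that adjacent vertices get completely adjacent sets. -/
@[ext]
structure HomCell {V W : Type*} (A : V → V → Prop) (B : W → W → Prop) where
  η : V → Set W
  nonempty : ∀ v, (η v).Nonempty
  adj : ∀ ⦃x y⦄, A x y → ∀ a ∈ η x, ∀ b ∈ η y, B a b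

namespace HomCell

variable {U V W : Type*} {A : V → V → Prop} {B : W → W → Prop}

theorem eta_injective : Function.Injective (HomCell.η (A := A) (B := B)) := by
  rintro ⟨f, _, _⟩ ⟨g, _, _⟩ h
  simpa using h

/-- Cells are ordered by pointwise inclusion (the face order of the `Hom` complex). -/
instance : PartialOrder (HomCell A B) := PartialOrder.lift HomCell.η eta_injective

theorem le_def {c d : HomCell A B} : c ≤ d ↔ ∀ v, c.η v ⊆ d.η v := Iff.rfl

noncomputable instance [Finite V] [Finite W] : Fintype (HomCell A B) := by
  classical
  have : Finite (HomCell A B) := Finite.of_injective _ (eta_injective (A := A) (B := B))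
  exact Fintype.ofFinite _

noncomputable instance : DecidableEq (HomCell A B) := Classical.decEq _

/-- Precomposition with a graph homomorphism `φ : (U,A') → (V,A)`: the induced
cellular (monotone) map `Hom(V,W) → Hom(U,W)`; this is the contravariant functoriality
of `Hom(-,H)`. -/
def pull {A' : U → U → Prop} (φ : U → V) (hφ : ∀ ⦃x y⦄, A' x y → A (φ x) (φ y)) :
    HomCell A B →o HomCell A' B where
  toFun c :=
    { η := fun u => c.η (φ u)
      nonempty := fun u => c.nonempty (φ u)
      adj := fun _ _ hxy => c.adj (hφ hxy) }
  monotone' := fun _ _ h u => h (φ u)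

/-- Postcomposition with a graph homomorphism `φ : (V,B) → (W,B')`: the induced
cellular (monotone) map `Hom(U,V) → Hom(U,W)`; this is the covariant functoriality
of `Hom(G,-)`. -/
def push {U₀ V₀ W₀ : Type*} {A₀ : U₀ → U₀ → Prop} {B₀ : V₀ → V₀ → Prop}
    {B₀' : W₀ → W₀ → Prop} (φ : V₀ → W₀)
    (hφ : ∀ ⦃x y⦄, B₀ x y → B₀' (φ x) (φ y)) (c : HomCell A₀ B₀) : HomCell A₀ B₀' where
  η v := φ '' c.η v
  nonempty v := (c.nonempty v).image φ
  adj := by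
    rintro x y hxy a ⟨a', ha', rfl⟩ b ⟨b', hb', rfl⟩
    exact hφ (c.adj hxy a' ha' b' hb')

end HomCell

/-- The geometric realization of the order complex of a preorder `P`:
formal convex combinations supported on finite chains of `P`. -/
def OrderComplex (P : Type*) [Preorder P] : Type _ :=
  { f : P → ℝ // (∀ x, 0 ≤ f x) ∧ HasSum f 1 ∧ IsChain (· ≤ ·) {x | f x ≠ 0} }

instance (P : Type*) [Preorder P] : TopologicalSpace (OrderComplex P) :=
  instTopologicalSpaceSubtype

/-- The topological space underlying the Lovász complex `Hom(G,H)` for graphs given by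
adjacency relations `A`, `B`: the (realization of the) poset of multihomomorphism cells. -/
def HomComplex {V W : Type*} (A : V → V → Prop) (B : W → W → Prop) : Type _ :=
  OrderComplex (HomCell A B)

instance {V W : Type*} (A : V → V → Prop) (B : W → W → Prop) :
    TopologicalSpace (HomComplex A B) := instTopologicalSpaceSubtype

/-- The simplicial map on order complexes induced by a monotone map of posets:
barycentric pushforward of weights. -/
noncomputable def OrderHom.realize {P Q : Type*} [Preorder P] [Preorder Q] [Fintype P]
    [DecidableEq Q] (φ : P →o Q) : C(OrderComplex P, OrderComplex Q) where
  toFun x := by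
    refine ⟨fun q => ∑ p ∈ Finset.univ.filter (fun p => φ p = q), x.1 p, ?_, ?_, ?_⟩
    · intro q
      exact Finset.sum_nonneg fun p _ => x.2.1 p
    · have h1 : ∑ p, x.1 p = 1 := (hasSum_fintype x.1).unique x.2.2.1
      have key : ∀ q ∉ Finset.univ.image φ,
          (∑ p ∈ Finset.univ.filter (fun p => φ p = q), x.1 p) = 0 := by
        intro q hq
        apply Finset.sum_eq_zero
        intro p hp
        simp only [Finset.mem_filter] at hp
        exact absurd (Finset.mem_image.mpr ⟨p, Finset.mem_univ p, hp.2⟩) hq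
      have : HasSum (fun q => ∑ p ∈ Finset.univ.filter (fun p => φ p = q), x.1 p) _ :=
        hasSum_sum_of_ne_finset_zero (s := Finset.univ.image φ)
        (f := fun q => ∑ p ∈ Finset.univ.filter (fun p => φ p = q), x.1 p) key
      have h2 : (∑ q ∈ Finset.univ.image φ,
          ∑ p ∈ Finset.univ.filter (fun p => φ p = q), x.1 p) = ∑ p, x.1 p :=
        Finset.sum_fiberwise_of_maps_to
          (fun p _ => Finset.mem_image_of_mem φ (Finset.mem_univ p)) _
      rwa [h2, h1] at this
    · intro q1 hq1 q2 hq2 hne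
      simp only [Set.mem_setOf_eq] at hq1 hq2
      obtain ⟨p1, hp1, hxp1⟩ : ∃ p, φ p = q1 ∧ x.1 p ≠ 0 := by
        by_contra h
        push_neg at h
        exact hq1 (Finset.sum_eq_zero fun p hp => by
          simp only [Finset.mem_filter] at hp
          exact h p hp.2)
      obtain ⟨p2, hp2, hxp2⟩ : ∃ p, φ p = q2 ∧ x.1 p ≠ 0 := by
        by_contra h
        push_neg at h
        exact hq2 (Finset.sum_eq_zero fun p hp => by
          simp only [Finset.mem_filter] at hp
          exact h p hp.2)
      have hp12 : p1 ≠ p2 := fun h => hne (hp1 ▸ hp2 ▸ h ▸ rfl)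
      rcases x.2.2.2 hxp1 hxp2 hp12 with h | h
      · exact Or.inl (hp1 ▸ hp2 ▸ φ.monotone h)
      · exact Or.inr (hp2 ▸ hp1 ▸ φ.monotone h)
  continuous_toFun := by
    apply Continuous.subtype_mk
    apply continuous_pi
    intro q
    exact continuous_finset_sum _ fun p _ => (continuous_apply p).comp continuous_subtype_val

/-!
Kozlov's fold lemma: if `N(w) ⊆ N(v)` in `G`, the retraction of `G` onto `G - w` sending `w` to
`v` induces a homotopy equivalence `Hom(G, H) ≃ Hom(G - w, H)`. On cell posets, the composite
`Hom(G, H) → Hom(G - w, H) → Hom(G, H)` and the identity are both below the map that enlarges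
the image of `w` by the image of `v`, and comparable poset maps realize to homotopic maps.

If `v` is a leaf of the forest `F` with neighbour `w`, then `N(w) ⊆ N(v)` in `F̄`, so `w` can be
folded away. `F - w` is again a forest, with the same independence number: the fold
`F̄ → F̄ - w` is a graph homomorphism, and homomorphisms are injective on cliques. When no edge is
left, `F̄` is the complete graph `K_m`.
-/

open scoped ContinuousMap

namespace OrderComplex

variable {P Q : Type*}

lemma sum_eq_one [Preorder P] [Fintype P] (x : OrderComplex P) : ∑ p, x.1 p = 1 :=
  (hasSum_fintype x.1).unique x.2.2.1

def pushforward [Fintype P] [DecidableEq Q] (f : P → Q) (y : P → ℝ) (q : Q) : ℝ :=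
  ∑ p with f p = q, y p

variable [Fintype P] [DecidableEq Q] {f : P → Q} {y : P → ℝ}

lemma pushforward_nonneg (hy : ∀ p, 0 ≤ y p) (q : Q) : 0 ≤ pushforward f y q :=
  Finset.sum_nonneg fun p _ => hy p

@[simp]
lemma pushforward_zero : pushforward f (0 : P → ℝ) = 0 :=
  funext fun _ => Finset.sum_const_zero

lemma sum_pushforward [Fintype Q] : ∑ q, pushforward f y q = ∑ p, y p :=
  Finset.sum_fiberwise _ _ _

lemma exists_ne_zero_of_pushforward_ne_zero {q : Q} (h : pushforward f y q ≠ 0) :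
    ∃ p, f p = q ∧ y p ≠ 0 := by
  obtain ⟨p, hp, hyp⟩ := Finset.exists_ne_zero_of_sum_ne_zero h
  exact ⟨p, (Finset.mem_filter.1 hp).2, hyp⟩

end OrderComplex

namespace OrderHom

open OrderComplex

variable {P Q R : Type*} [Preorder P] [Preorder Q] [Preorder R] [Fintype P]

lemma realize_apply [DecidableEq Q] (φ : P →o Q) (x : OrderComplex P) :
    (φ.realize x).1 = pushforward φ x.1 := rfl

lemma realize_comp [Fintype Q] [DecidableEq Q] [DecidableEq R] (φ : Q →o R) (ψ : P →o Q) :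
    (φ.comp ψ).realize = φ.realize.comp ψ.realize := by
  refine ContinuousMap.ext fun x => Subtype.ext <| funext fun r => ?_
  simp only [ContinuousMap.comp_apply, realize_apply, pushforward,
    Finset.sum_fiberwise_eq_sum_filter]
  simp

lemma realize_id [DecidableEq P] : (OrderHom.id : P →o P).realize = ContinuousMap.id _ := by
  refine ContinuousMap.ext fun x => Subtype.ext <| funext fun p => ?_
  simp [realize_apply, pushforward, Finset.filter_eq']

end OrderHom

namespace OrderComplex

open scoped Classical

variable {P Q : Type*} [PartialOrder P] [Fintype P] [Preorder Q] [DecidableEq Q]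
  {x : P → ℝ} {p : P} {c : ℝ}

noncomputable def massBelow (x : P → ℝ) (p : P) : ℝ :=
  ∑ p' with p' < p, x p'

lemma massBelow_nonneg (hx : ∀ p, 0 ≤ x p) (p : P) : 0 ≤ massBelow x p :=
  Finset.sum_nonneg fun p' _ => hx p'

lemma massBelow_add_self (x : P → ℝ) (p : P) :
    massBelow x p + x p = ∑ p' ∈ insert p ({p' | p' < p} : Finset P), x p' := by
  rw [Finset.sum_insert (by simp), add_comm, massBelow]

lemma massBelow_add_self_le_sum (hx : ∀ p, 0 ≤ x p) (p : P) :
    massBelow x p + x p ≤ ∑ p', x p' := by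
  rw [massBelow_add_self]
  exact Finset.sum_le_sum_of_subset_of_nonneg (Finset.subset_univ _) fun p' _ _ => hx p'

lemma massBelow_add_self_le_of_lt (hx : ∀ p, 0 ≤ x p) {p q : P} (h : p < q) :
    massBelow x p + x p ≤ massBelow x q := by
  rw [massBelow_add_self, massBelow]
  refine Finset.sum_le_sum_of_subset_of_nonneg ?_ fun p' _ _ => hx p'
  intro p' hp'
  simp only [Finset.mem_insert, Finset.mem_filter, Finset.mem_univ, true_and] at hp' ⊢
  rcases hp' with rfl | hp'
  exacts [h, hp'.trans h]

lemma le_of_massBelow_lt {x : OrderComplex P} {p₁ p₂ : P} (h₁ : x.1 p₁ ≠ 0)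
    (h₂ : x.1 p₂ ≠ 0) (h : massBelow x.1 p₁ < massBelow x.1 p₂ + x.1 p₂) : p₁ ≤ p₂ := by
  rcases x.2.2.2.total h₁ h₂ with h' | h'
  · exact h'
  · rcases h'.eq_or_lt with rfl | hlt
    · exact le_rfl
    · exact absurd (massBelow_add_self_le_of_lt x.2.1 hlt) h.not_ge

/- The homotopy between the realizations of `φ ≤ ψ` (the straight-line homotopy would leave the
order complex). Lay the weights of a chain end to end on `[0, 1]` in increasing order; at time `c`
the mass left of `c` is moved along `φ`, the rest along `ψ`. `prismLow c x p` is the part of the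
segment of `p` left of `c`. -/
noncomputable def prismLow (c : ℝ) (x : P → ℝ) (p : P) : ℝ :=
  min (massBelow x p + x p) c - min (massBelow x p) c

noncomputable def prismMap (φ ψ : P →o Q) (c : ℝ) (x : P → ℝ) : Q → ℝ :=
  pushforward φ (prismLow c x) + pushforward ψ (x - prismLow c x)

lemma prismLow_nonneg (hxp : 0 ≤ x p) : 0 ≤ prismLow c x p :=
  sub_nonneg.2 (min_le_min_right c (le_add_of_nonneg_right hxp))

lemma prismLow_le (hxp : 0 ≤ x p) : prismLow c x p ≤ x p := by
  unfold prismLow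
  rcases le_total (massBelow x p + x p) c with h | h <;>
    rcases le_total (massBelow x p) c with h' | h' <;>
    simp only [min_eq_left, min_eq_right, h, h'] <;> linarith

lemma prismLow_eq_zero (hxp : 0 ≤ x p) (h : c ≤ massBelow x p) : prismLow c x p = 0 := by
  rw [prismLow, min_eq_right h, min_eq_right (h.trans (le_add_of_nonneg_right hxp)), sub_self]

lemma prismLow_eq_self (hxp : 0 ≤ x p) (h : massBelow x p + x p ≤ c) : prismLow c x p = x p := by
  rw [prismLow, min_eq_left h, min_eq_left ((le_add_of_nonneg_right hxp).trans h),
    add_sub_cancel_left]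

variable {φ ψ : P →o Q}

lemma prismMap_nonneg (hx : ∀ p, 0 ≤ x p) (q : Q) : 0 ≤ prismMap φ ψ c x q :=
  add_nonneg (pushforward_nonneg (fun p => prismLow_nonneg (hx p)) q)
    (pushforward_nonneg (fun p => sub_nonneg.2 (prismLow_le (hx p))) q)

lemma sum_prismMap [Fintype Q] : ∑ q, prismMap φ ψ c x q = ∑ p, x p := by
  simp [prismMap, Finset.sum_add_distrib, sum_pushforward]

lemma exists_of_prismMap_ne_zero (hx : ∀ p, 0 ≤ x p) {q : Q} (hq : prismMap φ ψ c x q ≠ 0) :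
    ∃ p, x p ≠ 0 ∧
      (φ p = q ∧ massBelow x p < c ∨ ψ p = q ∧ c < massBelow x p + x p) := by
  have hlow : ∀ p, x p = 0 → prismLow c x p = 0 := fun p h0 =>
    le_antisymm ((prismLow_le (hx p)).trans h0.le) (prismLow_nonneg (hx p))
  rcases ne_or_eq (pushforward φ (prismLow c x) q) 0 with h | h
  · obtain ⟨p, rfl, hp⟩ := exists_ne_zero_of_pushforward_ne_zero h
    exact ⟨p, mt (hlow p) hp, .inl ⟨rfl, lt_of_not_ge fun hc => hp (prismLow_eq_zero (hx p) hc)⟩⟩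
  · rw [prismMap, Pi.add_apply, h, zero_add] at hq
    obtain ⟨p, rfl, hp⟩ := exists_ne_zero_of_pushforward_ne_zero hq
    refine ⟨p, fun h0 => hp ?_, .inr ⟨rfl, lt_of_not_ge fun hc => hp ?_⟩⟩
    · simp [h0, hlow p h0]
    · simp [prismLow_eq_self (hx p) hc]

lemma isChain_prismMap (hφψ : φ ≤ ψ) (x : OrderComplex P) :
    IsChain (· ≤ ·) {q | prismMap φ ψ c x.1 q ≠ 0} := by
  have same : ∀ (f : P →o Q) {p₁ p₂}, x.1 p₁ ≠ 0 → x.1 p₂ ≠ 0 → f p₁ ≤ f p₂ ∨ f p₂ ≤ f p₁ :=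
    fun f _ _ h₁ h₂ => (x.2.2.2.total h₁ h₂).imp (fun h => f.monotone h) (fun h => f.monotone h)
  have cross : ∀ {p₁ p₂}, x.1 p₁ ≠ 0 → x.1 p₂ ≠ 0 → massBelow x.1 p₁ < c →
      c < massBelow x.1 p₂ + x.1 p₂ → φ p₁ ≤ ψ p₂ := fun h₁ h₂ hc₁ hc₂ =>
    (φ.monotone (le_of_massBelow_lt h₁ h₂ (hc₁.trans hc₂))).trans (hφψ _)
  intro q₁ hq₁ q₂ hq₂ _
  obtain ⟨p₁, h₁, ⟨rfl, hc₁⟩ | ⟨rfl, hc₁⟩⟩ := exists_of_prismMap_ne_zero x.2.1 hq₁ <;>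
    obtain ⟨p₂, h₂, ⟨rfl, hc₂⟩ | ⟨rfl, hc₂⟩⟩ := exists_of_prismMap_ne_zero x.2.1 hq₂
  exacts [same φ h₁ h₂, .inl (cross h₁ h₂ hc₁ hc₂), .inr (cross h₂ h₁ hc₂ hc₁), same ψ h₁ h₂]

lemma prismMap_one (x : OrderComplex P) : prismMap φ ψ 1 x.1 = pushforward φ x.1 := by
  have hlow : prismLow 1 x.1 = x.1 := funext fun p => prismLow_eq_self (x.2.1 p)
    ((massBelow_add_self_le_sum x.2.1 p).trans (sum_eq_one x).le)
  simp [prismMap, hlow]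

lemma prismMap_zero (x : OrderComplex P) : prismMap φ ψ 0 x.1 = pushforward ψ x.1 := by
  have hlow : prismLow 0 x.1 = 0 :=
    funext fun p => prismLow_eq_zero (x.2.1 p) (massBelow_nonneg x.2.1 p)
  simp [prismMap, hlow]

lemma continuous_prismMap : Continuous fun cx : ℝ × (P → ℝ) => prismMap φ ψ cx.1 cx.2 := by
  unfold prismMap pushforward prismLow massBelow
  fun_prop

end OrderComplex

namespace OrderHom

open OrderComplex

variable {P Q : Type*} [PartialOrder P] [Fintype P] [Preorder Q] [Fintype Q] [DecidableEq Q]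

theorem realize_homotopic_of_le {φ ψ : P →o Q} (h : φ ≤ ψ) :
    φ.realize.Homotopic ψ.realize := by
  have hc : Continuous fun tx : unitInterval × OrderComplex P => ((1 : ℝ) - tx.1, tx.2.1) := by
    fun_prop
  refine ⟨⟨⟨fun tx => ⟨prismMap φ ψ (1 - tx.1) tx.2.1, prismMap_nonneg tx.2.2.1, ?_,
    isChain_prismMap h tx.2⟩, (continuous_prismMap.comp hc).subtype_mk _⟩,
    fun x => ?_, fun x => ?_⟩⟩
  · have := hasSum_fintype (prismMap φ ψ (1 - tx.1) tx.2.1)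
    rwa [sum_prismMap, sum_eq_one] at this
  · exact Subtype.ext (by simpa [realize_apply] using prismMap_one x)
  · exact Subtype.ext (by simpa [realize_apply] using prismMap_zero x)

end OrderHom

namespace OrderComplex

variable {P Q : Type*} [PartialOrder P] [PartialOrder Q] [Fintype P] [Fintype Q]
  [DecidableEq P] [DecidableEq Q]

noncomputable def homotopyEquivOfRetraction (ρ : P →o Q) (ε : Q →o P) (μ : P →o P)
    (hρε : ρ.comp ε = OrderHom.id) (hερ : ε.comp ρ ≤ μ) (hμ : OrderHom.id ≤ μ) :
    OrderComplex P ≃ₕ OrderComplex Q where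
  toFun := ρ.realize
  invFun := ε.realize
  left_inv := by
    rw [← OrderHom.realize_comp, ← OrderHom.realize_id]
    exact (OrderHom.realize_homotopic_of_le hερ).trans (OrderHom.realize_homotopic_of_le hμ).symm
  right_inv := by
    rw [← OrderHom.realize_comp, hρε, OrderHom.realize_id]

noncomputable def homotopyEquivOfOrderIso (e : P ≃o Q) : OrderComplex P ≃ₕ OrderComplex Q :=
  homotopyEquivOfRetraction e e.symm OrderHom.id (by ext; simp) (fun p => by simp) le_rfl

end OrderComplex

namespace SimpleGraph

variable {V W : Type*} {G F : SimpleGraph V} {v w x y x' y' : V}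

lemma Adj.of_neighborSet_subset (h : G.Adj x y) (hx : G.neighborSet x ⊆ G.neighborSet x')
    (hy : G.neighborSet y ⊆ G.neighborSet y') : G.Adj x' y' :=
  (hy (hx h : G.Adj x' y).symm).symm

def fold [DecidableEq V] (hvw : v ≠ w) (hN : G.neighborSet w ⊆ G.neighborSet v) :
    G →g G.induce {w}ᶜ where
  toFun x := if hx : x = w then ⟨v, hvw⟩ else ⟨x, hx⟩
  map_rel' {x y} h := by
    have hsub : ∀ z, G.neighborSet z ⊆
        G.neighborSet (if hz : z = w then ⟨v, hvw⟩ else ⟨z, hz⟩ : ({w}ᶜ : Set V)).1 := by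
      intro z
      split_ifs with hz
      exacts [hz ▸ hN, subset_rfl]
    exact h.of_neighborSet_subset (hsub x) (hsub y)

section Fold

variable [DecidableEq V] (hvw : v ≠ w) (hN : G.neighborSet w ⊆ G.neighborSet v)

@[simp]
lemma fold_apply_self : G.fold hvw hN w = ⟨v, hvw⟩ :=
  dif_pos rfl

@[simp]
lemma fold_apply_of_ne (hx : x ≠ w) : G.fold hvw hN x = ⟨x, hx⟩ :=
  dif_neg hx

end Fold

lemma Hom.cliqueNum_le [Finite W] {H : SimpleGraph W} (f : G →g H) :
    G.cliqueNum ≤ H.cliqueNum := by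
  classical
  obtain ⟨s, hs⟩ := G.exists_isNClique_cliqueNum
  have hinj : Set.InjOn f s := fun x hx y hy hxy =>
    by_contra fun hne => (f.map_adj (hs.isClique hx hy hne)).ne hxy
  have hclique : H.IsClique (s.image f : Set W) := by
    rw [Finset.coe_image]
    rintro _ ⟨x, hx, rfl⟩ _ ⟨y, hy, rfl⟩ hne
    exact f.map_adj (hs.isClique hx hy fun h => hne (h ▸ rfl))
  calc G.cliqueNum = (s.image f).card := by rw [Finset.card_image_of_injOn hinj, hs.card_eq]
    _ ≤ H.cliqueNum := hclique.card_le_cliqueNum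

lemma cliqueNum_induce_compl_singleton [Finite V] [DecidableEq V] (hvw : v ≠ w)
    (hN : G.neighborSet w ⊆ G.neighborSet v) : (G.induce {w}ᶜ).cliqueNum = G.cliqueNum :=
  (cliqueNum_induce_le _).antisymm (G.fold hvw hN).cliqueNum_le

lemma cliqueNum_top [Finite V] : (⊤ : SimpleGraph V).cliqueNum = Nat.card V := by
  have := Fintype.ofFinite V
  obtain ⟨s, hs⟩ := (⊤ : SimpleGraph V).exists_isNClique_cliqueNum
  refine le_antisymm ?_ ?_
  · rw [← hs.card_eq, Nat.card_eq_fintype_card]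
    exact Finset.card_le_univ s
  · rw [Nat.card_eq_fintype_card, ← Finset.card_univ]
    exact (IsClique.top (α := V) (Finset.univ : Finset V)).card_le_cliqueNum

lemma compl_induce (s : Set V) : (F.induce s)ᶜ = Fᶜ.induce s := by
  ext a b
  simp [Subtype.ext_iff]

lemma IsAcyclic.exists_adj_forall_adj_eq [Finite V] (hF : F.IsAcyclic) {a b : V}
    (hab : F.Adj a b) : ∃ v w, F.Adj v w ∧ ∀ y, F.Adj v y → y = w := by
  have : Nonempty V := ⟨a⟩
  obtain ⟨u, v, p, hp, hmax⟩ := Walk.exists_isPath_forall_isPath_length_le_length F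
  have hnil : ¬p.Nil := fun h => by
    simpa [h.length_eq_zero] using hmax a b (Walk.cons hab .nil) (by simp [hab.ne])
  refine ⟨u, p.snd, p.adj_snd hnil, fun y hy => hF.eq_snd_of_adj_start hp hy ?_⟩
  by_contra hy'
  simpa using hmax _ _ _ (hp.cons hy' (h := hy.symm))

lemma neighborSet_compl_subset_of_forall_adj_eq (hvw : F.Adj v w)
    (hv : ∀ y, F.Adj v y → y = w) : Fᶜ.neighborSet w ⊆ Fᶜ.neighborSet v := by
  intro y ⟨hwy, hFwy⟩
  exact ⟨fun hvy => hFwy (hvy ▸ hvw.symm), fun hFvy => hwy (hv y hFvy).symm⟩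

end SimpleGraph

namespace HomCell

variable {U V V' W : Type*} {B : W → W → Prop}

@[simp]
lemma pull_apply_η {A' : U → U → Prop} {A : V → V → Prop} (φ : U → V)
    (hφ : ∀ ⦃x y⦄, A' x y → A (φ x) (φ y)) (c : HomCell A B) (u : U) :
    (pull φ hφ c).η u = c.η (φ u) := rfl

def congrLeft {G : SimpleGraph V} {G' : SimpleGraph V'} (e : G ≃g G') :
    HomCell G.Adj B ≃o HomCell G'.Adj B :=
  OrderIso.ofHomInv (pull e.symm fun _ _ h => e.symm.map_adj_iff.2 h)
    (pull e fun _ _ h => e.map_adj_iff.2 h)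
    (by ext c x : 4; simp) (by ext c x : 4; simp)

variable [DecidableEq V] {G : SimpleGraph V} {v w : V}

def absorb (hN : G.neighborSet w ⊆ G.neighborSet v) : HomCell G.Adj B →o HomCell G.Adj B where
  toFun c :=
    { η := fun x => if x = w then c.η w ∪ c.η v else c.η x
      nonempty := fun x => by
        split_ifs
        exacts [(c.nonempty w).inl, c.nonempty x]
      adj := by
        have hsource : ∀ x, ∀ a ∈ (if x = w then c.η w ∪ c.η v else c.η x),
            ∃ x₀, a ∈ c.η x₀ ∧ G.neighborSet x ⊆ G.neighborSet x₀ := by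
          intro x a ha
          split_ifs at ha with hx
          · subst hx
            rcases ha with ha | ha
            exacts [⟨x, ha, subset_rfl⟩, ⟨v, ha, hN⟩]
          · exact ⟨x, ha, subset_rfl⟩
        intro x y hxy a ha b hb
        obtain ⟨x₀, ha, hx⟩ := hsource x a ha
        obtain ⟨y₀, hb, hy⟩ := hsource y b hb
        exact c.adj (hxy.of_neighborSet_subset hx hy) a ha b hb }
  monotone' c d h x := by
    dsimp only
    split_ifs
    exacts [Set.union_subset_union (h w) (h v), h x]

@[simp]
lemma absorb_apply_η (hN : G.neighborSet w ⊆ G.neighborSet v) (c : HomCell G.Adj B) (x : V) :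
    (absorb hN c).η x = if x = w then c.η w ∪ c.η v else c.η x := rfl

end HomCell

namespace HomComplex

open SimpleGraph

variable {V V' W : Type*} [Finite V] [Finite W] {G : SimpleGraph V} (B : W → W → Prop)

noncomputable def homotopyEquivOfIso [Finite V'] {G' : SimpleGraph V'} (e : G ≃g G') :
    HomComplex G.Adj B ≃ₕ HomComplex G'.Adj B :=
  OrderComplex.homotopyEquivOfOrderIso (HomCell.congrLeft e)

noncomputable def homotopyEquivFold [DecidableEq V] {v w : V} (hvw : v ≠ w)
    (hN : G.neighborSet w ⊆ G.neighborSet v) :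
    HomComplex G.Adj B ≃ₕ HomComplex (G.induce {w}ᶜ).Adj B :=
  OrderComplex.homotopyEquivOfRetraction (HomCell.pull Subtype.val fun _ _ => induce_adj.1)
    (HomCell.pull (G.fold hvw hN) fun _ _ h => (G.fold hvw hN).map_adj h) (HomCell.absorb hN)
    (by
      ext c ⟨x, hx⟩ : 4
      simp [show x ≠ w from hx])
    (fun c x => by
      by_cases hx : x = w
      · subst hx
        simp
      · simp [hx])
    (fun c x => by by_cases hx : x = w <;> simp [hx])

theorem nonempty_homotopyEquiv_compl_of_isAcyclic {F : SimpleGraph V}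
    (hF : F.IsAcyclic) :
    Nonempty (HomComplex Fᶜ.Adj B ≃ₕ HomComplex (⊤ : SimpleGraph (Fin F.indepNum)).Adj B) := by
  classical
  induction hn : Nat.card V using Nat.strong_induction_on generalizing V with
  | _ n ih =>
  rw [← cliqueNum_compl]
  by_cases hE : ∃ a b, F.Adj a b
  · obtain ⟨a, b, hab⟩ := hE
    obtain ⟨v, w, hvw, hv⟩ := hF.exists_adj_forall_adj_eq hab
    have hN := neighborSet_compl_subset_of_forall_adj_eq hvw hv
    have hcard : Nat.card ({w}ᶜ : Set V) < n :=
      hn ▸ Finite.card_subtype_lt (p := (· ∈ ({w}ᶜ : Set V))) (x := w) (by simp)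
    obtain ⟨e⟩ := ih _ hcard (hF.induce _) rfl
    rw [← cliqueNum_compl, compl_induce, cliqueNum_induce_compl_singleton hvw.ne hN] at e
    exact ⟨(homotopyEquivFold B hvw.ne hN).trans e⟩
  · obtain rfl : F = ⊥ := by
      ext a b
      simpa using fun h => hE ⟨a, b, h⟩
    rw [compl_bot]
    exact ⟨homotopyEquivOfIso B (Iso.completeGraph (Finite.equivFinOfCardEq cliqueNum_top.symm))⟩

end HomComplex

theorem forest_complement_homotopyEquiv_general {V : Type*} [Fintype V]
    (F : SimpleGraph V) (hF : F.IsAcyclic) (m n : ℕ)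
    (hmax : ∃ s : Finset V, s.card = m ∧ (∀ a ∈ s, ∀ b ∈ s, ¬F.Adj a b) ∧
      ∀ t : Finset V, (∀ a ∈ t, ∀ b ∈ t, ¬F.Adj a b) → t.card ≤ m) :
    Nonempty (ContinuousMap.HomotopyEquiv
      (HomComplex Fᶜ.Adj (⊤ : SimpleGraph (Fin n)).Adj)
      (HomComplex (⊤ : SimpleGraph (Fin m)).Adj (⊤ : SimpleGraph (Fin n)).Adj)) := by
  obtain ⟨s, rfl, hs, hs_max⟩ := hmax
  have hs_maximum : F.IsMaximumIndepSet s :=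
    ⟨fun a ha b hb _ => hs a ha b hb, fun t ht => hs_max t fun a ha b hb hab =>
      ht ha hb hab.ne hab⟩
  rw [F.maximumIndepSet_card_eq_indepNum s hs_maximum]
  exact HomComplex.nonempty_homotopyEquiv_compl_of_isAcyclic _ hF

/-- **Babson–Kozlov**: if `F` is a forest and `m` is the maximal cardinality of an
independent set of vertices in `F`, then `Hom(F̄, K_n) ≃ Hom(K_m, K_n)`, where `F̄`
is the (unlooped) complement of `F`. -/
theorem forest_complement_homotopyEquiv {V : Type*} [Fintype V] [DecidableEq V]
    (F : SimpleGraph V) (hF : F.IsAcyclic) (m n : ℕ)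
    (hmax : ∃ s : Finset V, s.card = m ∧ (∀ a ∈ s, ∀ b ∈ s, ¬F.Adj a b) ∧
      ∀ t : Finset V, (∀ a ∈ t, ∀ b ∈ t, ¬F.Adj a b) → t.card ≤ m) :
    Nonempty (ContinuousMap.HomotopyEquiv
      (HomComplex Fᶜ.Adj (⊤ : SimpleGraph (Fin n)).Adj)
      (HomComplex (⊤ : SimpleGraph (Fin m)).Adj (⊤ : SimpleGraph (Fin n)).Adj)) :=
  forest_complement_homotopyEquiv_general F hF m n hmax
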